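/- Let p > 1. Then the function f(x) = cos_p(x)·cosh_p(x) is strictly decreasing on (0, π_p/2), with f(x) → 1 as x → 0⁺ and f(x) → 0 as x → (π_p/2)⁻. In particular, for all x ∈ (0, π_p/2), cos_p(x) < 1/cosh_p(x). -/

import Mathlib

open Real Set Filter Topology

/-- Generalized inverse sine: `arcsin_p x = ∫₀ˣ (1 - tᵖ)^(-1/p) dt`. -/
noncomputable def arcsinp (p : ℝ) (x : ℝ) : ℝ := ∫ t in (0:ℝ)..x, (1 - t ^ p) ^ (-1 / p)

/-- Generalized π: `π_p = 2 · arcsin_p 1`. -/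
noncomputable def pip (p : ℝ) : ℝ := 2 * arcsinp p 1

/-- Generalized sine: the inverse of `arcsinp p` (as a map from `[0,1]`). -/
noncomputable def sinp (p : ℝ) : ℝ → ℝ := Function.invFunOn (arcsinp p) (Set.Icc 0 1)

/-- Generalized cosine. -/
noncomputable def cosp (p : ℝ) (x : ℝ) : ℝ := (1 - (sinp p x) ^ p) ^ (1 / p)

/-- Generalized tangent. -/
noncomputable def tanp (p : ℝ) (x : ℝ) : ℝ := sinp p x / cosp p x

/-- Generalized inverse hyperbolic sine: `arsinh_p x = ∫₀ˣ (1 + tᵖ)^(-1/p) dt`. -/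
noncomputable def arsinhp (p : ℝ) (x : ℝ) : ℝ := ∫ t in (0:ℝ)..x, (1 + t ^ p) ^ (-1 / p)

/-- Generalized hyperbolic sine: the inverse of `arsinhp p` (as a map from `[0,∞)`). -/
noncomputable def sinhp (p : ℝ) : ℝ → ℝ := Function.invFunOn (arsinhp p) (Set.Ici 0)

/-- Generalized hyperbolic cosine. -/
noncomputable def coshp (p : ℝ) (x : ℝ) : ℝ := (1 + (sinhp p x) ^ p) ^ (1 / p)

/-- Generalized hyperbolic tangent. -/
noncomputable def tanhp (p : ℝ) (x : ℝ) : ℝ := sinhp p x / coshp p x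
/-! Write `s = sin_p x`, `h = sinh_p x`, `c = cos_p x`, `C = cosh_p x`. Then
`(c C)^p = (1 - s^p)(1 + h^p)`, and since `s' = c`, `h' = C`, its derivative is
`p c C ((c h)^(p-1) - (s C)^(p-1))`. This is negative because `tanh_p x < x < tan_p x`: the
integrand of `arsinh_p` decreases and that of `arcsin_p` increases, so comparing `∫₀ʰ` and `∫₀ˢ`
with the values at the endpoint gives `h / C < x < s / c`. The limits come from
`sin_p, sinh_p → 0` at `0` and `sin_p → 1` at `π_p / 2`, and `c C < 1` is strict monotonicity
together with the limit `1` at `0`. -/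

open MeasureTheory intervalIntegral Function

section Primitive

variable {w : ℝ → ℝ}

theorem strictMonoOn_integral_of_pos {a : ℝ} {S : Set ℝ} (hS : S.OrdConnected)
    (hint : ∀ x ∈ S, IntervalIntegrable w volume a x) (hpos : ∀ t ∈ interior S, 0 < w t) :
    StrictMonoOn (fun x => ∫ t in a..x, w t) S := by
  intro x hx y hy hxy
  have hxy_int : IntervalIntegrable w volume x y := (hint x hx).symm.trans (hint y hy)
  have hIoo : Ioo x y ⊆ interior S :=
    isOpen_Ioo.subset_interior_iff.2 (Ioo_subset_Icc_self.trans (hS.out hx hy))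
  have hpos_xy : 0 < ∫ t in x..y, w t :=
    intervalIntegral_pos_of_pos_on hxy_int (fun t ht => hpos t (hIoo ht)) hxy
  simp only [← integral_add_adjacent_intervals (hint x hx) hxy_int]
  linarith

theorem integral_lt_mul_of_strictMonoOn {a b : ℝ} (hab : a < b) (hc : ContinuousOn w (Icc a b))
    (hw : StrictMonoOn w (Icc a b)) : ∫ t in a..b, w t < (b - a) * w b := by
  have hb : b ∈ Icc a b := right_mem_Icc.2 hab.le
  simpa using integral_lt_integral_of_continuousOn_of_le_of_exists_lt hab hc continuousOn_const
    (fun t ht => hw.monotoneOn (Ioc_subset_Icc_self ht) hb ht.2)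
    ⟨a, left_mem_Icc.2 hab.le, hw (left_mem_Icc.2 hab.le) hb hab⟩

theorem mul_lt_integral_of_strictAntiOn {a b : ℝ} (hab : a < b) (hc : ContinuousOn w (Icc a b))
    (hw : StrictAntiOn w (Icc a b)) : (b - a) * w b < ∫ t in a..b, w t := by
  have hb : b ∈ Icc a b := right_mem_Icc.2 hab.le
  simpa using integral_lt_integral_of_continuousOn_of_le_of_exists_lt hab continuousOn_const hc
    (fun t ht => hw.antitoneOn (Ioc_subset_Icc_self ht) hb ht.2)
    ⟨a, left_mem_Icc.2 hab.le, hw (left_mem_Icc.2 hab.le) hb hab⟩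

end Primitive

namespace StrictMonoOn

variable {f : ℝ → ℝ} {S : Set ℝ}

theorem invFunOn_image_image (hf : StrictMonoOn f S) : invFunOn f S '' (f '' S) = S :=
  hf.injOn.leftInvOn_invFunOn.image_image

theorem strictMonoOn_invFunOn (hf : StrictMonoOn f S) : StrictMonoOn (invFunOn f S) (f '' S) := by
  rintro _ ⟨x, hx, rfl⟩ _ ⟨y, hy, rfl⟩ hxy
  rw [hf.injOn.leftInvOn_invFunOn hx, hf.injOn.leftInvOn_invFunOn hy]
  exact (hf.lt_iff_lt hx hy).1 hxy

theorem hasDerivAt_invFunOn (hf : StrictMonoOn f S) {x f' : ℝ} (hx : x ∈ interior (f '' S))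
    (hgx : invFunOn f S x ∈ interior S) (hd : HasDerivAt f f' (invFunOn f S x)) (hf' : f' ≠ 0) :
    HasDerivAt (invFunOn f S) f'⁻¹ x := by
  have hT := mem_interior_iff_mem_nhds.1 hx
  have hcont : ContinuousAt (invFunOn f S) x :=
    hf.strictMonoOn_invFunOn.continuousAt_of_image_mem_nhds hT
      (by rw [hf.invFunOn_image_image]; exact mem_interior_iff_mem_nhds.1 hgx)
  exact hd.of_local_left_inverse hcont hf' (eventually_of_mem hT fun y hy => invFunOn_eq hy)

end StrictMonoOn

theorem StrictAntiOn.lt_of_tendsto_nhdsGT {f : ℝ → ℝ} {a b L x : ℝ}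
    (hf : StrictAntiOn f (Ioo a b)) (hL : Tendsto f (𝓝[>] a) (𝓝 L)) (hx : x ∈ Ioo a b) :
    f x < L := by
  obtain ⟨y, hay, hyx⟩ := exists_between hx.1
  have hy : y ∈ Ioo a b := ⟨hay, hyx.trans hx.2⟩
  refine (hf hy hx hyx).trans_le (ge_of_tendsto hL ?_)
  filter_upwards [Ioo_mem_nhdsGT hay] with z hz
  exact (hf ⟨hz.1, hz.2.trans hy.2⟩ hy hz.2).le

variable {p x : ℝ}

theorem rpow_neg_one_div {y : ℝ} (hy : 0 ≤ y) : y ^ (-1 / p) = (y ^ (1 / p))⁻¹ := by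
  rw [neg_div, Real.rpow_neg hy]

section Arcsinp

theorem strictMonoOn_arcsinp_integrand (hp : 0 < p) :
    StrictMonoOn (fun t : ℝ => (1 - t ^ p) ^ (-1 / p)) (Ico 0 1) := by
  intro t ht u hu htu
  have hup : u ^ p < 1 := Real.rpow_lt_one (ht.1.trans htu.le) hu.2 hp
  exact Real.rpow_lt_rpow_of_neg (by linarith) (by gcongr; exact ht.1)
    (div_neg_of_neg_of_pos (by norm_num) hp)

theorem continuousOn_arcsinp_integrand (hp : 0 < p) :
    ContinuousOn (fun t : ℝ => (1 - t ^ p) ^ (-1 / p)) (Ico 0 1) := by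
  refine (continuousOn_const.sub (continuousOn_id.rpow_const fun _ _ => Or.inr hp.le)).rpow_const
    fun t ht => Or.inl (sub_ne_zero.2 (Real.rpow_lt_one ht.1 ht.2 hp).ne')

theorem intervalIntegrable_arcsinp_integrand (hp : 1 < p) :
    IntervalIntegrable (fun t : ℝ => (1 - t ^ p) ^ (-1 / p)) volume 0 1 := by
  have hp0 : 0 < p := zero_lt_one.trans hp
  have hq : -1 / p < 0 := div_neg_of_neg_of_pos (by norm_num) hp0
  have hdom : IntervalIntegrable (fun t : ℝ => (1 - t) ^ (-1 / p)) volume 0 1 := by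
    have h : -1 < -1 / p := by rw [lt_div_iff₀ hp0]; linarith
    simpa using ((intervalIntegrable_rpow' (a := 0) (b := 1) h).comp_sub_left 1).symm
  have hmeas : Measurable fun t : ℝ => (1 - t ^ p) ^ (-1 / p) := by fun_prop
  refine hdom.mono_fun' hmeas.aestronglyMeasurable ?_
  rw [uIoc_of_le zero_le_one]
  filter_upwards [ae_restrict_mem measurableSet_Ioc] with t ⟨ht0, ht1⟩
  rcases ht1.eq_or_lt with rfl | ht1
  · simp [Real.zero_rpow hq.ne]
  · have htp : t ^ p ≤ t := by
      simpa using Real.rpow_le_rpow_of_exponent_ge ht0 ht1.le hp.le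
    have htp1 : t ^ p < 1 := htp.trans_lt ht1
    rw [Real.norm_of_nonneg (Real.rpow_nonneg (by linarith) _)]
    exact Real.rpow_le_rpow_of_nonpos (by linarith) (by linarith) hq.le

theorem arcsinp_zero : arcsinp p 0 = 0 := integral_same

theorem arcsinp_one : arcsinp p 1 = pip p / 2 := by
  rw [pip]; ring

theorem arcsinp_strictMonoOn (hp : 1 < p) : StrictMonoOn (arcsinp p) (Icc 0 1) := by
  refine strictMonoOn_integral_of_pos ordConnected_Icc
    (fun x hx => (intervalIntegrable_arcsinp_integrand hp).mono_set ?_) fun t ht => ?_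
  · rw [uIcc_of_le hx.1, uIcc_of_le zero_le_one]
    exact Icc_subset_Icc_right hx.2
  · rw [interior_Icc] at ht
    exact Real.rpow_pos_of_pos (sub_pos.2 (Real.rpow_lt_one ht.1.le ht.2 (by linarith))) _

theorem arcsinp_continuousOn (hp : 1 < p) : ContinuousOn (arcsinp p) (Icc 0 1) := by
  have h := continuousOn_primitive_interval' (intervalIntegrable_arcsinp_integrand hp) left_mem_uIcc
  rwa [uIcc_of_le zero_le_one] at h

theorem arcsinp_image (hp : 1 < p) : arcsinp p '' Icc 0 1 = Icc 0 (pip p / 2) := by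
  rw [(arcsinp_continuousOn hp).image_Icc_of_monotoneOn zero_le_one
    (arcsinp_strictMonoOn hp).monotoneOn, arcsinp_zero, arcsinp_one]

theorem pip_div_two_pos (hp : 1 < p) : 0 < pip p / 2 := by
  simpa [arcsinp_zero, arcsinp_one] using
    arcsinp_strictMonoOn hp (left_mem_Icc.2 zero_le_one) (right_mem_Icc.2 zero_le_one) one_pos

theorem hasDerivAt_arcsinp (hp : 1 < p) {t : ℝ} (ht : t ∈ Ioo 0 1) :
    HasDerivAt (arcsinp p) ((1 - t ^ p) ^ (-1 / p)) t := by
  have hc := (continuousOn_arcsinp_integrand (zero_lt_one.trans hp)).mono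
    (Ioo_subset_Ico_self : Ioo (0 : ℝ) 1 ⊆ Ico 0 1)
  refine integral_hasDerivAt_right ((intervalIntegrable_arcsinp_integrand hp).mono_set ?_)
    (hc.stronglyMeasurableAtFilter isOpen_Ioo t ht) (hc.continuousAt (isOpen_Ioo.mem_nhds ht))
  rw [uIcc_of_le ht.1.le, uIcc_of_le zero_le_one]
  exact Icc_subset_Icc_right ht.2.le

theorem arcsinp_lt_mul (hp : 0 < p) {s : ℝ} (hs : s ∈ Ioo 0 1) :
    arcsinp p s < s * (1 - s ^ p) ^ (-1 / p) := by
  have hsub : Icc 0 s ⊆ Ico 0 1 := Icc_subset_Ico_right hs.2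
  simpa [arcsinp] using integral_lt_mul_of_strictMonoOn hs.1
    ((continuousOn_arcsinp_integrand hp).mono hsub) ((strictMonoOn_arcsinp_integrand hp).mono hsub)

end Arcsinp

section Sinp

theorem sinp_strictMonoOn (hp : 1 < p) : StrictMonoOn (sinp p) (Icc 0 (pip p / 2)) := by
  rw [← arcsinp_image hp]
  exact (arcsinp_strictMonoOn hp).strictMonoOn_invFunOn

theorem sinp_image (hp : 1 < p) : sinp p '' Icc 0 (pip p / 2) = Icc 0 1 := by
  rw [← arcsinp_image hp]
  exact (arcsinp_strictMonoOn hp).invFunOn_image_image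

theorem sinp_arcsinp (hp : 1 < p) {t : ℝ} (ht : t ∈ Icc 0 1) : sinp p (arcsinp p t) = t :=
  (arcsinp_strictMonoOn hp).injOn.leftInvOn_invFunOn ht

theorem arcsinp_sinp (hp : 1 < p) (hx : x ∈ Icc 0 (pip p / 2)) : arcsinp p (sinp p x) = x := by
  rw [← arcsinp_image hp] at hx
  exact invFunOn_eq hx

theorem sinp_zero (hp : 1 < p) : sinp p 0 = 0 := by
  simpa [arcsinp_zero] using sinp_arcsinp hp (left_mem_Icc.2 zero_le_one)

theorem sinp_pip_div_two (hp : 1 < p) : sinp p (pip p / 2) = 1 := by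
  simpa [arcsinp_one] using sinp_arcsinp hp (right_mem_Icc.2 zero_le_one)

theorem sinp_mem_Ioo (hp : 1 < p) (hx : x ∈ Ioo 0 (pip p / 2)) : sinp p x ∈ Ioo 0 1 := by
  simpa [sinp_zero hp, sinp_pip_div_two hp] using
    (sinp_strictMonoOn hp).image_Ioo_subset (mem_image_of_mem _ hx)

theorem hasDerivAt_sinp (hp : 1 < p) (hx : x ∈ Ioo 0 (pip p / 2)) :
    HasDerivAt (sinp p) (cosp p x) x := by
  have hs := sinp_mem_Ioo hp hx
  have hcos : 0 < 1 - sinp p x ^ p := sub_pos.2 (Real.rpow_lt_one hs.1.le hs.2 (by linarith))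
  have h : HasDerivAt (sinp p) ((1 - sinp p x ^ p) ^ (-1 / p))⁻¹ x :=
    (arcsinp_strictMonoOn hp).hasDerivAt_invFunOn
    (by rwa [arcsinp_image hp, interior_Icc]) (by rwa [interior_Icc])
    (hasDerivAt_arcsinp hp hs) (Real.rpow_pos_of_pos hcos _).ne'
  rwa [rpow_neg_one_div hcos.le, inv_inv] at h

theorem tendsto_sinp_nhdsGT_zero (hp : 1 < p) : Tendsto (sinp p) (𝓝[>] 0) (𝓝 0) := by
  have h := (sinp_strictMonoOn hp).continuousWithinAt_right_of_image_mem_nhdsWithin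
    (Icc_mem_nhdsGE (pip_div_two_pos hp))
    (by rw [sinp_image hp, sinp_zero hp]; exact Icc_mem_nhdsGE one_pos)
  simpa [sinp_zero hp] using h.tendsto.mono_left (nhdsWithin_mono _ Ioi_subset_Ici_self)

theorem tendsto_sinp_nhdsLT_pip_div_two (hp : 1 < p) :
    Tendsto (sinp p) (𝓝[<] (pip p / 2)) (𝓝 1) := by
  have h := (sinp_strictMonoOn hp).continuousWithinAt_left_of_image_mem_nhdsWithin
    (Icc_mem_nhdsLE (pip_div_two_pos hp))
    (by rw [sinp_image hp, sinp_pip_div_two hp]; exact Icc_mem_nhdsLE one_pos)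
  simpa [sinp_pip_div_two hp] using h.tendsto.mono_left (nhdsWithin_mono _ Iio_subset_Iic_self)

end Sinp

section Arsinhp

theorem strictAntiOn_arsinhp_integrand (hp : 0 < p) :
    StrictAntiOn (fun t : ℝ => (1 + t ^ p) ^ (-1 / p)) (Ici 0) := by
  intro t ht u hu htu
  have htp : 0 ≤ t ^ p := Real.rpow_nonneg ht p
  exact Real.rpow_lt_rpow_of_neg (by linarith) (by gcongr)
    (div_neg_of_neg_of_pos (by norm_num) hp)

theorem continuousOn_arsinhp_integrand (hp : 0 < p) :
    ContinuousOn (fun t : ℝ => (1 + t ^ p) ^ (-1 / p)) (Ici 0) := by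
  refine (continuousOn_const.add (continuousOn_id.rpow_const fun _ _ => Or.inr hp.le)).rpow_const
    fun t ht => Or.inl (add_pos_of_pos_of_nonneg one_pos (Real.rpow_nonneg ht p)).ne'

theorem intervalIntegrable_arsinhp_integrand (hp : 0 < p) (hx : 0 ≤ x) :
    IntervalIntegrable (fun t : ℝ => (1 + t ^ p) ^ (-1 / p)) volume 0 x :=
  ((continuousOn_arsinhp_integrand hp).mono Icc_subset_Ici_self).intervalIntegrable_of_Icc hx

theorem arsinhp_zero : arsinhp p 0 = 0 := integral_same

theorem arsinhp_strictMonoOn (hp : 0 < p) : StrictMonoOn (arsinhp p) (Ici 0) :=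
  strictMonoOn_integral_of_pos ordConnected_Ici
    (fun _ hx => intervalIntegrable_arsinhp_integrand hp hx) fun _ ht =>
      Real.rpow_pos_of_pos (add_pos_of_pos_of_nonneg one_pos
        (Real.rpow_nonneg (interior_subset ht) p)) _

theorem inv_one_add_le_arsinhp_integrand (hp : 1 ≤ p) {t : ℝ} (ht : 0 ≤ t) :
    (1 + t)⁻¹ ≤ (1 + t ^ p) ^ (-1 / p) := by
  have hp0 : 0 < p := zero_lt_one.trans_le hp
  have h1 : 0 < 1 + t ^ p := add_pos_of_pos_of_nonneg one_pos (Real.rpow_nonneg ht p)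
  rw [rpow_neg_one_div h1.le]
  refine inv_anti₀ (Real.rpow_pos_of_pos h1 _) ?_
  calc (1 + t ^ p) ^ (1 / p) ≤ ((1 + t) ^ p) ^ (1 / p) := by
        gcongr
        simpa using Real.add_rpow_le_rpow_add zero_le_one ht hp
    _ = 1 + t := by rw [one_div, Real.rpow_rpow_inv (by linarith) hp0.ne']

theorem log_one_add_le_arsinhp (hp : 1 ≤ p) (hx : 0 ≤ x) : log (1 + x) ≤ arsinhp p x := by
  have hint : IntervalIntegrable (fun t : ℝ => (1 + t)⁻¹) volume 0 x :=
    ((continuousOn_const.add continuousOn_id).inv₀ fun t ht =>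
      (add_pos_of_pos_of_nonneg one_pos ht.1).ne').intervalIntegrable_of_Icc hx
  calc log (1 + x) = ∫ t in 0..x, (1 + t)⁻¹ := by
        have h0 : (0 : ℝ) ∉ uIcc 1 (1 + x) := by
          rw [uIcc_of_le (by linarith)]; exact fun h => by linarith [h.1]
        simp [integral_comp_add_left (fun t => t⁻¹), integral_inv h0]
    _ ≤ arsinhp p x := integral_mono_on hx hint
        (intervalIntegrable_arsinhp_integrand (by linarith) hx)
        fun t ht => inv_one_add_le_arsinhp_integrand hp ht.1

theorem tendsto_arsinhp_atTop (hp : 1 ≤ p) : Tendsto (arsinhp p) atTop atTop := by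
  refine tendsto_atTop_mono' atTop ?_
    (Real.tendsto_log_atTop.comp (tendsto_atTop_add_const_left atTop 1 tendsto_id))
  filter_upwards [eventually_ge_atTop 0] with x hx
  exact log_one_add_le_arsinhp hp hx

theorem arsinhp_image (hp : 1 ≤ p) : arsinhp p '' Ici 0 = Ici 0 := by
  have hmono := arsinhp_strictMonoOn (zero_lt_one.trans_le hp)
  refine subset_antisymm ?_ fun c hc => ?_
  · rintro _ ⟨x, hx, rfl⟩
    simpa [arsinhp_zero] using hmono.monotoneOn self_mem_Ici hx hx
  obtain ⟨M, hcM, hM⟩ :=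
    ((tendsto_arsinhp_atTop hp).eventually_ge_atTop c).and (eventually_ge_atTop 0) |>.exists
  have hcont : ContinuousOn (arsinhp p) (Icc 0 M) := by
    have h := continuousOn_primitive_interval'
      (intervalIntegrable_arsinhp_integrand (zero_lt_one.trans_le hp) hM) left_mem_uIcc
    rwa [uIcc_of_le hM] at h
  obtain ⟨x, hx, rfl⟩ := intermediate_value_Icc hM hcont ⟨by rwa [arsinhp_zero], hcM⟩
  exact ⟨x, hx.1, rfl⟩

theorem hasDerivAt_arsinhp (hp : 0 < p) {t : ℝ} (ht : 0 < t) :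
    HasDerivAt (arsinhp p) ((1 + t ^ p) ^ (-1 / p)) t := by
  have hc := (continuousOn_arsinhp_integrand hp).mono
    (Ioi_subset_Ici_self : Ioi (0 : ℝ) ⊆ Ici 0)
  exact integral_hasDerivAt_right (intervalIntegrable_arsinhp_integrand hp ht.le)
    (hc.stronglyMeasurableAtFilter isOpen_Ioi t ht) (hc.continuousAt (isOpen_Ioi.mem_nhds ht))

theorem mul_lt_arsinhp (hp : 0 < p) {h : ℝ} (hh : 0 < h) :
    h * (1 + h ^ p) ^ (-1 / p) < arsinhp p h := by
  simpa [arsinhp] using mul_lt_integral_of_strictAntiOn hh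
    ((continuousOn_arsinhp_integrand hp).mono Icc_subset_Ici_self)
    ((strictAntiOn_arsinhp_integrand hp).mono Icc_subset_Ici_self)

end Arsinhp

section Sinhp

theorem sinhp_strictMonoOn (hp : 1 ≤ p) : StrictMonoOn (sinhp p) (Ici 0) := by
  rw [← arsinhp_image hp]
  exact (arsinhp_strictMonoOn (zero_lt_one.trans_le hp)).strictMonoOn_invFunOn

theorem sinhp_image (hp : 1 ≤ p) : sinhp p '' Ici 0 = Ici 0 := by
  have h := (arsinhp_strictMonoOn (zero_lt_one.trans_le hp)).invFunOn_image_image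
  rwa [arsinhp_image hp] at h

theorem arsinhp_sinhp (hp : 1 ≤ p) (hx : 0 ≤ x) : arsinhp p (sinhp p x) = x := by
  rw [← mem_Ici, ← arsinhp_image hp] at hx
  exact invFunOn_eq hx

theorem sinhp_zero (hp : 1 ≤ p) : sinhp p 0 = 0 := by
  have h : sinhp p (arsinhp p 0) = 0 :=
    (arsinhp_strictMonoOn (zero_lt_one.trans_le hp)).injOn.leftInvOn_invFunOn self_mem_Ici
  rwa [arsinhp_zero] at h

theorem sinhp_pos (hp : 1 ≤ p) (hx : 0 < x) : 0 < sinhp p x := by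
  simpa [sinhp_zero hp] using sinhp_strictMonoOn hp self_mem_Ici hx.le hx

theorem hasDerivAt_sinhp (hp : 1 ≤ p) (hx : 0 < x) : HasDerivAt (sinhp p) (coshp p x) x := by
  have hp0 : 0 < p := zero_lt_one.trans_le hp
  have hh := sinhp_pos hp hx
  have hcosh : 0 < 1 + sinhp p x ^ p := add_pos_of_pos_of_nonneg one_pos (Real.rpow_nonneg hh.le p)
  have h : HasDerivAt (sinhp p) ((1 + sinhp p x ^ p) ^ (-1 / p))⁻¹ x :=
    (arsinhp_strictMonoOn hp0).hasDerivAt_invFunOn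
      (by rw [arsinhp_image hp, interior_Ici]; exact hx) (by rw [interior_Ici]; exact hh)
      (hasDerivAt_arsinhp hp0 hh) (Real.rpow_pos_of_pos hcosh _).ne'
  rwa [rpow_neg_one_div hcosh.le, inv_inv] at h

theorem tendsto_sinhp_nhdsGT_zero (hp : 1 ≤ p) : Tendsto (sinhp p) (𝓝[>] 0) (𝓝 0) := by
  have h := (sinhp_strictMonoOn hp).continuousWithinAt_right_of_image_mem_nhdsWithin
    self_mem_nhdsWithin (by rw [sinhp_image hp, sinhp_zero hp]; exact self_mem_nhdsWithin)
  simpa [sinhp_zero hp] using h.tendsto.mono_left (nhdsWithin_mono _ Ioi_subset_Ici_self)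

end Sinhp

section CospMulCoshp

theorem one_sub_sinp_rpow_pos (hp : 1 < p) (hx : x ∈ Ioo 0 (pip p / 2)) :
    0 < 1 - sinp p x ^ p :=
  sub_pos.2 (Real.rpow_lt_one (sinp_mem_Ioo hp hx).1.le (sinp_mem_Ioo hp hx).2 (by linarith))

theorem one_add_sinhp_rpow_pos (hp : 1 ≤ p) (hx : 0 ≤ x) : 0 < 1 + sinhp p x ^ p := by
  have h := (sinhp_strictMonoOn hp).monotoneOn self_mem_Ici hx hx
  rw [sinhp_zero hp] at h
  exact add_pos_of_pos_of_nonneg one_pos (Real.rpow_nonneg h p)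

theorem cosp_pos (hp : 1 < p) (hx : x ∈ Ioo 0 (pip p / 2)) : 0 < cosp p x :=
  Real.rpow_pos_of_pos (one_sub_sinp_rpow_pos hp hx) _

theorem coshp_pos (hp : 1 ≤ p) (hx : 0 ≤ x) : 0 < coshp p x :=
  Real.rpow_pos_of_pos (one_add_sinhp_rpow_pos hp hx) _

theorem tanhp_lt_self (hp : 1 ≤ p) (hx : 0 < x) : tanhp p x < x := by
  have h := mul_lt_arsinhp (zero_lt_one.trans_le hp) (sinhp_pos hp hx)
  rwa [arsinhp_sinhp hp hx.le, rpow_neg_one_div (one_add_sinhp_rpow_pos hp hx.le).le,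
    ← div_eq_mul_inv] at h

theorem self_lt_tanp (hp : 1 < p) (hx : x ∈ Ioo 0 (pip p / 2)) : x < tanp p x := by
  have h := arcsinp_lt_mul (zero_lt_one.trans hp) (sinp_mem_Ioo hp hx)
  rwa [arcsinp_sinp hp (Ioo_subset_Icc_self hx), rpow_neg_one_div (one_sub_sinp_rpow_pos hp hx).le,
    ← div_eq_mul_inv] at h

theorem cosp_mul_sinhp_lt_sinp_mul_coshp (hp : 1 < p) (hx : x ∈ Ioo 0 (pip p / 2)) :
    cosp p x * sinhp p x < sinp p x * coshp p x := by
  have h := (tanhp_lt_self hp.le hx.1).trans (self_lt_tanp hp hx)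
  rwa [tanhp, tanp, div_lt_div_iff₀ (coshp_pos hp.le hx.1.le) (cosp_pos hp hx), mul_comm] at h

theorem cosp_rpow (hp : 1 < p) (hx : x ∈ Ioo 0 (pip p / 2)) :
    cosp p x ^ p = 1 - sinp p x ^ p := by
  rw [cosp, one_div, Real.rpow_inv_rpow (one_sub_sinp_rpow_pos hp hx).le (by linarith)]

theorem coshp_rpow (hp : 1 ≤ p) (hx : 0 ≤ x) : coshp p x ^ p = 1 + sinhp p x ^ p := by
  rw [coshp, one_div, Real.rpow_inv_rpow (one_add_sinhp_rpow_pos hp hx).le (by linarith)]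

theorem hasDerivAt_cosp_mul_coshp_rpow (hp : 1 < p) (hx : x ∈ Ioo 0 (pip p / 2)) :
    HasDerivAt (fun y => (cosp p y * coshp p y) ^ p)
      (p * cosp p x * coshp p x *
        ((cosp p x * sinhp p x) ^ (p - 1) - (sinp p x * coshp p x) ^ (p - 1))) x := by
  have hc := cosp_pos hp hx
  have hC := coshp_pos hp.le hx.1.le
  have hs := (sinp_mem_Ioo hp hx).1.le
  have hh := (sinhp_pos hp.le hx.1).le
  have hG := (((hasDerivAt_sinp hp hx).rpow_const (Or.inr hp.le)).const_sub 1).mul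
    (((hasDerivAt_sinhp hp.le hx.1).rpow_const (Or.inr hp.le)).const_add 1)
  have hEq : (fun y => (1 - sinp p y ^ p) * (1 + sinhp p y ^ p)) =ᶠ[𝓝 x]
      fun y => (cosp p y * coshp p y) ^ p := by
    filter_upwards [isOpen_Ioo.mem_nhds hx] with y hy
    rw [Real.mul_rpow (cosp_pos hp hy).le (coshp_pos hp.le hy.1.le).le, cosp_rpow hp hy,
      coshp_rpow hp.le hy.1.le]
  refine (hG.congr_of_eventuallyEq hEq.symm).congr_deriv ?_
  have hpow {a : ℝ} (ha : 0 < a) : a ^ p = a ^ (p - 1) * a := by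
    rw [← Real.rpow_add_one ha.ne', sub_add_cancel]
  rw [← cosp_rpow hp hx, ← coshp_rpow hp.le hx.1.le, Real.mul_rpow hc.le hh,
    Real.mul_rpow hs hC.le, hpow hc, hpow hC]
  ring

theorem strictAntiOn_cosp_mul_coshp_rpow (hp : 1 < p) :
    StrictAntiOn (fun y => (cosp p y * coshp p y) ^ p) (Ioo 0 (pip p / 2)) := by
  refine strictAntiOn_of_hasDerivWithinAt_neg (convex_Ioo _ _)
    (fun x hx => (hasDerivAt_cosp_mul_coshp_rpow hp hx).continuousAt.continuousWithinAt)
    (fun x hx => (hasDerivAt_cosp_mul_coshp_rpow hp (interior_subset hx)).hasDerivWithinAt)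
    fun x hx => ?_
  rw [interior_Ioo] at hx
  have hlt := Real.rpow_lt_rpow
    (mul_nonneg (cosp_pos hp hx).le (sinhp_pos hp.le hx.1).le)
    (cosp_mul_sinhp_lt_sinp_mul_coshp hp hx) (sub_pos.2 hp)
  have hpos : 0 < p * cosp p x * coshp p x := by
    have := cosp_pos hp hx; have := coshp_pos hp.le hx.1.le; positivity
  exact mul_neg_of_pos_of_neg hpos (sub_neg.2 hlt)

theorem strictAntiOn_cosp_mul_coshp (hp : 1 < p) :
    StrictAntiOn (fun y => cosp p y * coshp p y) (Ioo 0 (pip p / 2)) := fun x hx y hy hxy =>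
  (Real.rpow_lt_rpow_iff (mul_pos (cosp_pos hp hy) (coshp_pos hp.le hy.1.le)).le
    (mul_pos (cosp_pos hp hx) (coshp_pos hp.le hx.1.le)).le (by linarith)).1
    (strictAntiOn_cosp_mul_coshp_rpow hp hx hy hxy)

theorem tendsto_cosp_mul_coshp_nhdsGT_zero (hp : 1 < p) :
    Tendsto (fun y => cosp p y * coshp p y) (𝓝[>] 0) (𝓝 1) := by
  have hp0 : 0 < p := zero_lt_one.trans hp
  have hc : Tendsto (cosp p) (𝓝[>] 0) (𝓝 ((1 - 0 ^ p) ^ (1 / p))) :=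
    (((tendsto_sinp_nhdsGT_zero hp).rpow_const (Or.inr hp0.le)).const_sub 1).rpow_const
      (Or.inr (by positivity))
  have hC : Tendsto (coshp p) (𝓝[>] 0) (𝓝 ((1 + 0 ^ p) ^ (1 / p))) :=
    (((tendsto_sinhp_nhdsGT_zero hp.le).rpow_const (Or.inr hp0.le)).const_add 1).rpow_const
      (Or.inr (by positivity))
  simpa [Real.zero_rpow hp0.ne'] using hc.mul hC

theorem tendsto_cosp_mul_coshp_nhdsLT_pip_div_two (hp : 1 < p) :
    Tendsto (fun y => cosp p y * coshp p y) (𝓝[<] (pip p / 2)) (𝓝 0) := by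
  have hp0 : 0 < p := zero_lt_one.trans hp
  have hc : Tendsto (cosp p) (𝓝[<] (pip p / 2)) (𝓝 ((1 - 1 ^ p) ^ (1 / p))) :=
    (((tendsto_sinp_nhdsLT_pip_div_two hp).rpow_const (Or.inr hp0.le)).const_sub 1).rpow_const
      (Or.inr (by positivity))
  have hC : Tendsto (coshp p) (𝓝[<] (pip p / 2)) (𝓝 (coshp p (pip p / 2))) :=
    ((hasDerivAt_sinhp hp.le (pip_div_two_pos hp)).continuousAt.tendsto.mono_left
      nhdsWithin_le_nhds).rpow_const (Or.inr hp0.le) |>.const_add 1 |>.rpow_const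
      (Or.inr (by positivity))
  simpa [Real.zero_rpow (inv_pos.2 hp0).ne'] using hc.mul hC

end CospMulCoshp

theorem stmt1 (p : ℝ) (hp : 1 < p) :
    StrictAntiOn (fun x => cosp p x * coshp p x) (Set.Ioo 0 (pip p / 2)) ∧
    Tendsto (fun x => cosp p x * coshp p x) (𝓝[>] 0) (𝓝 1) ∧
    Tendsto (fun x => cosp p x * coshp p x) (𝓝[<] (pip p / 2)) (𝓝 0) ∧
    ∀ x ∈ Set.Ioo 0 (pip p / 2), cosp p x < 1 / coshp p x := by
  have hanti := strictAntiOn_cosp_mul_coshp hp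
  have hlim := tendsto_cosp_mul_coshp_nhdsGT_zero hp
  refine ⟨hanti, hlim, tendsto_cosp_mul_coshp_nhdsLT_pip_div_two hp, fun x hx => ?_⟩
  rw [lt_div_iff₀ (coshp_pos hp.le hx.1.le)]
  exact hanti.lt_of_tendsto_nhdsGT hlim hx
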